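/- arXiv:2506.24032 — 3 statements merged into one kernel-verified Lean document; each statement's English description precedes it below -/
import Mathlib

section
/- Let G = (V, E) be a graph and construct the bipartite graph B with vertex set X ∪ Y ∪ {z}, where X = {vᵢ : uᵢ ∈ V}, Y = {vᵢ' : uᵢ ∈ V}, edges {vᵢ, vᵢ'} for all i, edges {vᵢ, vⱼ'} and {vᵢ', vⱼ} for each edge {uᵢ, uⱼ} ∈ E, and edges {z, vᵢ'} for all i. Then if W ⊆ V is a dominating set of G, the set {vᵢ' : uᵢ ∈ W} ∪ {z} is a dominating set of B. -/
/-! The apex `z` dominates every `vᵢ'`. A vertex `vᵢ` is dominated by `vᵢ'` when `uᵢ ∈ W`,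
and otherwise by `vⱼ'` for a neighbour `uⱼ ∈ W` of `uᵢ`. -/

/-- The relation generating the bipartite graph `B` built from `G`:
vertices `Sum.inl i` are the `vᵢ` (class `X`), vertices `Sum.inr (Sum.inl i)` are the `vᵢ'`
(class `Y`), and `Sum.inr (Sum.inr ())` is the apex `z`. -/
def bipRel {V : Type*} (G : SimpleGraph V) : (V ⊕ V ⊕ Unit) → (V ⊕ V ⊕ Unit) → Prop
  | Sum.inl i, Sum.inr (Sum.inl j) => i = j ∨ G.Adj i j
  | Sum.inr (Sum.inr _), Sum.inr (Sum.inl _) => True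
  | _, _ => False

/-- The bipartite graph `B` built from `G`. -/
def bipGraph {V : Type*} (G : SimpleGraph V) : SimpleGraph (V ⊕ V ⊕ Unit) :=
  SimpleGraph.fromRel (bipRel G)

section

variable {V : Type*} (G : SimpleGraph V)

theorem bipGraph_adj_inr_inl_inl_iff (i j : V) :
    (bipGraph G).Adj (Sum.inr (Sum.inl j)) (Sum.inl i) ↔ i = j ∨ G.Adj i j := by
  simp [bipGraph, bipRel]

theorem bipGraph_adj_apex_inr_inl (i : V) :
    (bipGraph G).Adj (Sum.inr (Sum.inr ())) (Sum.inr (Sum.inl i)) := by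
  simp [bipGraph, bipRel]

end

theorem stmt8 {V : Type*} (G : SimpleGraph V) (W : Set V)
    (hW : ∀ v ∉ W, ∃ u ∈ W, G.Adj u v) :
    ∀ x ∉ ((fun i => (Sum.inr (Sum.inl i) : V ⊕ V ⊕ Unit)) '' W ∪
            {Sum.inr (Sum.inr ())}),
      ∃ y ∈ ((fun i => (Sum.inr (Sum.inl i) : V ⊕ V ⊕ Unit)) '' W ∪
            {Sum.inr (Sum.inr ())}),
        (bipGraph G).Adj y x := by
  rintro (i | i | ⟨⟩) hx
  · by_cases hi : i ∈ W
    · exact ⟨_, Or.inl ⟨i, hi, rfl⟩, (bipGraph_adj_inr_inl_inl_iff G i i).2 (Or.inl rfl)⟩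
    · obtain ⟨u, hu, hui⟩ := hW i hi
      exact ⟨_, Or.inl ⟨u, hu, rfl⟩, (bipGraph_adj_inr_inl_inl_iff G i u).2 (Or.inr hui.symm)⟩
  · exact ⟨_, Or.inr rfl, bipGraph_adj_apex_inr_inl G i⟩
  · exact absurd (Or.inr rfl) hx
end

section
/- In the bipartite construction B from a graph G (duplicated vertex classes X, Y plus an apex z adjacent to all of Y), if Ŵ is a dominating set of B, then the set W = {uᵢ : vᵢ ∈ Ŵ or vᵢ' ∈ Ŵ} is a dominating set of G. -/
theorem bipGraph_adj_inl_iff {V : Type*} {G : SimpleGraph V} {y : V ⊕ V ⊕ Unit} {u : V} :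
    (bipGraph G).Adj y (Sum.inl u) ↔ ∃ j, y = Sum.inr (Sum.inl j) ∧ (u = j ∨ G.Adj u j) := by
  rw [bipGraph, SimpleGraph.fromRel_adj]
  rcases y with i | j | t <;> simp [bipRel]

theorem stmt9 {V : Type*} (G : SimpleGraph V) (What : Set (V ⊕ V ⊕ Unit))
    (h : ∀ x ∉ What, ∃ y ∈ What, (bipGraph G).Adj y x) :
    ∀ u ∉ {i : V | Sum.inl i ∈ What ∨ Sum.inr (Sum.inl i) ∈ What},
      ∃ v ∈ {i : V | Sum.inl i ∈ What ∨ Sum.inr (Sum.inl i) ∈ What}, G.Adj v u := by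
  intro u hu
  obtain ⟨hv, hv'⟩ := not_or.mp hu
  obtain ⟨y, hy, hadj⟩ := h (Sum.inl u) hv
  obtain ⟨j, rfl, rfl | hju⟩ := bipGraph_adj_inl_iff.mp hadj
  · exact absurd hy hv'
  · exact ⟨j, Or.inr hy, hju.symm⟩
end

section
/- Knapsack reduces to dominating set knapsack on stars: given items 1,…,n with sizes θᵢ and values pᵢ, capacity b and target q, form the star graph with center v₀ (weight 0, profit 0) and leaves vᵢ (weight θᵢ, profit pᵢ). Then there exists I ⊆ {1,…,n} with Σ_{i∈I} θᵢ ≤ b and Σ_{i∈I} pᵢ ≥ q if and only if there exists a dominating set U of the star with Σ_{v∈U} w(v) ≤ b and Σ_{v∈U} α(v) ≥ q. -/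
/-! The centre has weight and profit 0 and dominates every leaf, so an item set `I` gives the
dominating set `{v₀} ∪ {vᵢ : i ∈ I}` of the same weight and profit, while any vertex set has the
same weight and profit as its set of leaves. -/

open Finset

lemma SimpleGraph.fromRel_eq_center_adj {α : Type*} (c : α) {v : α} (hv : v ≠ c) :
    (SimpleGraph.fromRel fun a (_ : α) => a = c).Adj c v := by
  simp [SimpleGraph.fromRel_adj, hv.symm]

lemma Fin.sum_cases_zero_eq_sum_preimage_succ {M : Type*} [AddCommMonoid M] {n : ℕ}
    (f : Fin n → M) (U : Finset (Fin (n + 1))) :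
    ∑ v ∈ U, Fin.cases (motive := fun _ => M) 0 f v =
      ∑ i ∈ U.preimage Fin.succ (Fin.succ_injective n).injOn, f i := by
  refine (Finset.sum_preimage Fin.succ U _ (Fin.cases 0 f) ?_).symm
  intro v _ hv
  obtain rfl : v = 0 := by simpa [Fin.range_succ] using hv
  rfl

lemma Fin.preimage_succ_insert_zero_map_succ {n : ℕ} (I : Finset (Fin n)) :
    (insert 0 (I.map (Fin.succEmb n))).preimage Fin.succ (Fin.succ_injective n).injOn = I := by
  ext i
  simp [Fin.succ_ne_zero]

theorem stmt11 (n : ℕ) (θ p : Fin n → ℕ) (b q : ℕ) :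
    (∃ I : Finset (Fin n), ∑ i ∈ I, θ i ≤ b ∧ q ≤ ∑ i ∈ I, p i) ↔
    (∃ U : Finset (Fin (n+1)),
      (∀ v ∉ U, ∃ u ∈ U,
        (SimpleGraph.fromRel (fun a (_ : Fin (n+1)) => a = 0)).Adj u v) ∧
      ∑ v ∈ U, Fin.cases (motive := fun _ => ℕ) 0 θ v ≤ b ∧
      q ≤ ∑ v ∈ U, Fin.cases (motive := fun _ => ℕ) 0 p v) := by
  simp only [Fin.sum_cases_zero_eq_sum_preimage_succ]
  constructor
  · rintro ⟨I, hθ, hp⟩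
    refine ⟨insert 0 (I.map (Fin.succEmb n)), fun v hv => ⟨0, mem_insert_self _ _, ?_⟩, ?_⟩
    · exact SimpleGraph.fromRel_eq_center_adj 0 fun h => hv (h ▸ mem_insert_self _ _)
    · rw [Fin.preimage_succ_insert_zero_map_succ]
      exact ⟨hθ, hp⟩
  · rintro ⟨U, -, hθ, hp⟩
    exact ⟨_, hθ, hp⟩
end
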